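/- The sequence of truncated nested radicals S m 2 converges to 3 as m → ∞; that is, √(1+2√(1+3√(1+4√(1+...)))) = 3. -/
import Mathlib


noncomputable def S : ℕ → ℝ → ℝ
  | 0, _ => 0
  | m + 1, y => Real.sqrt (1 + y * S m (y + 1))

lemma S_nonneg (m : ℕ) (y : ℝ) : 0 ≤ S m y := by
  cases m with
  | zero => simp [S]
  | succ n => exact Real.sqrt_nonneg _

lemma S_le (m : ℕ) : ∀ y : ℝ, 0 ≤ y → S m y ≤ y + 1 := by
  induction m with
  | zero => intro y hy; simp [S]; linarith
  | succ n ih =>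
    intro y hy
    have h1 : S n (y + 1) ≤ y + 2 := by
      have := ih (y + 1) (by linarith)
      linarith
    have h0 : 0 ≤ S n (y + 1) := S_nonneg n (y + 1)
    have : (1 : ℝ) + y * S n (y + 1) ≤ (y + 1) ^ 2 := by nlinarith
    calc S (n + 1) y = Real.sqrt (1 + y * S n (y + 1)) := rfl
      _ ≤ Real.sqrt ((y + 1) ^ 2) := Real.sqrt_le_sqrt this
      _ = y + 1 := by
          rw [Real.sqrt_sq (by linarith : (0:ℝ) ≤ y + 1)]

lemma S_lower (m : ℕ) : ∀ y : ℝ, 1 ≤ y → y + 1 - S m y ≤ y * (y + 1) / (y + m) := by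
  induction m with
  | zero =>
    intro y hy
    have hy0 : (0:ℝ) < y := by linarith
    simp only [S, Nat.cast_zero, add_zero]
    rw [mul_comm, mul_div_assoc, div_self (ne_of_gt hy0), mul_one]
    linarith
  | succ n ih =>
    intro y hy
    have hy0 : (0:ℝ) < y := by linarith
    have hA0 : 0 ≤ S n (y + 1) := S_nonneg n (y + 1)
    have hA2 : S n (y + 1) ≤ y + 2 := by
      have := S_le n (y + 1) (by linarith)
      linarith
    have hden : (0:ℝ) < y + 1 + n := by positivity
    have hIH : (y + 2 - S n (y + 1)) * (y + 1 + n) ≤ (y + 1) * (y + 2) := by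
      have := ih (y + 1) (by linarith)
      have h' : y + 1 + 1 - S n (y + 1) ≤ (y + 1) * (y + 2) / (y + 1 + n) := by
        convert this using 2 <;> ring
      have := (le_div_iff₀ hden).mp h'
      linarith
    set s := Real.sqrt (1 + y * S n (y + 1)) with hs
    have harg : (0:ℝ) ≤ 1 + y * S n (y + 1) := by nlinarith
    have hs2 : s ^ 2 = 1 + y * S n (y + 1) := Real.sq_sqrt harg
    have hs1 : 1 ≤ s :=
      calc (1:ℝ) = Real.sqrt 1 := by simp
        _ ≤ s := Real.sqrt_le_sqrt (by nlinarith)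
    have hgoal : S (n + 1) y = s := rfl
    rw [hgoal]
    have hdm : (0:ℝ) < y + (n + 1 : ℕ) := by
      push_cast; positivity
    rw [le_div_iff₀ hdm]
    push_cast
    -- key identity: (y+1-s)*(y+1+s) = y*(y+2 - S n (y+1))
    have hid : (y + 1 - s) * (y + 1 + s) = y * (y + 2 - S n (y + 1)) := by
      have : (y + 1) ^ 2 - s ^ 2 = y * (y + 2 - S n (y + 1)) := by
        rw [hs2]; ring
      nlinarith [this]
    rcases le_or_gt s (y + 1) with hcase | hcase
    · -- s ≤ y + 1
      have h1 : (y + 1 - s) * (y + 2) ≤ y * (y + 2 - S n (y + 1)) := by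
        nlinarith [hid]
      -- (y+1-s)*(y+n+1)*(y+2) ≤ y*(y+2 - S)*(y+1+n) ≤ y*(y+1)*(y+2)
      have h2 : y * (y + 2 - S n (y + 1)) * (y + 1 + n) ≤ y * ((y + 1) * (y + 2)) := by
        nlinarith [hIH]
      nlinarith [h1, h2, mul_nonneg (mul_nonneg hy0.le (by linarith : (0:ℝ) ≤ y + 2 - S n (y+1))) (by positivity : (0:ℝ) ≤ (n:ℝ))]
    · have : (y + 1 - s) * (y + (n + 1)) ≤ 0 := by
        apply mul_nonpos_of_nonpos_of_nonneg <;> [linarith; positivity]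
      nlinarith [this]

theorem ramanujan_nested_radical_three :
    Filter.Tendsto (fun m => S m 2) Filter.atTop (nhds 3) := by
  have h_up : ∀ m : ℕ, S m 2 ≤ 3 := by
    intro m
    have := S_le m 2 (by norm_num)
    linarith
  have h_low : ∀ m : ℕ, 3 - 6 / (2 + (m:ℝ)) ≤ S m 2 := by
    intro m
    have := S_lower m 2 (by norm_num)
    have h : 2 + 1 - S m 2 ≤ 2 * (2 + 1) / (2 + m) := this
    have : 6 / (2 + (m:ℝ)) = 2 * (2 + 1) / (2 + m) := by norm_num
    rw [this]
    linarith
  have hlim : Filter.Tendsto (fun m : ℕ => 3 - 6 / (2 + (m:ℝ))) Filter.atTop (nhds 3) := by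
    have h1 : Filter.Tendsto (fun m : ℕ => (2 + (m:ℝ))) Filter.atTop Filter.atTop :=
      Filter.tendsto_atTop_add_const_left _ 2 tendsto_natCast_atTop_atTop
    have h2 : Filter.Tendsto (fun m : ℕ => 6 / (2 + (m:ℝ))) Filter.atTop (nhds 0) :=
      Filter.Tendsto.div_atTop tendsto_const_nhds h1
    have := tendsto_const_nhds (x := (3:ℝ)) (f := Filter.atTop (α := ℕ)) |>.sub h2
    simpa using this
  exact tendsto_of_tendsto_of_tendsto_of_le_of_le hlim tendsto_const_nhds h_low h_up
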